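/- arXiv:1604.01853 — 2 statements merged into one kernel-verified Lean document; each statement's English description precedes it below -/
import Mathlib

section
/- Let f, g : [a,b] → ℝ with g integrable, 0 ≤ g(t) ≤ 1 for all t ∈ [a,b], f monotone nondecreasing on [a,b], and f·g integrable on [a,b]. Setting λ = ∫_a^b g(t) dt, one has |∫_a^{a+λ} f(t) dt − ∫_a^b f(t) g(t) dt| ≤ λ[f(a+λ) − f(a)] + (b − a − λ)[f(b) − f(a+λ)]. -/
/-!
Put `c = a + λ`. Since `∫_a^b g = c - a`, the mass `∫_a^c (1 - g)` that `g` misses on `[a, c]`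
equals the mass `m = ∫_c^b g` it carries on `[c, b]`, and
`∫_a^c f - ∫_a^b f g = ∫_a^c f (1 - g) - ∫_c^b f g`.
By monotonicity the first integral lies in `[f(a) m, f(c) m]` and the second in
`[f(c) m, f(b) m]`, so their difference is at most `(f(c) - f(a)) m + (f(b) - f(c)) m` in
absolute value. Finally `m ≤ c - a = λ` and `m ≤ b - c` because `0 ≤ g ≤ 1`.
-/

open MeasureTheory Set

section

variable {f g w : ℝ → ℝ} {a b c x y : ℝ}

theorem MonotoneOn.intervalIntegrable_mul (hf : MonotoneOn f (uIcc x y))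
    (hw : IntervalIntegrable w volume x y) :
    IntervalIntegrable (fun t => f t * w t) volume x y := by
  rw [intervalIntegrable_iff'] at hw ⊢
  exact hw.mul_of_top_right (hf.memLp_isCompact isCompact_uIcc)

theorem MonotoneOn.integral_mul_mem_Icc (hxy : x ≤ y) (hf : MonotoneOn f (Icc x y))
    (hw : IntervalIntegrable w volume x y) (hw0 : ∀ t ∈ Icc x y, 0 ≤ w t) :
    (∫ t in x..y, f t * w t) ∈ Icc (f x * ∫ t in x..y, w t) (f y * ∫ t in x..y, w t) := by
  have hfw := (uIcc_of_le hxy ▸ hf).intervalIntegrable_mul hw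
  rw [← intervalIntegral.integral_const_mul, ← intervalIntegral.integral_const_mul]
  constructor
  · refine intervalIntegral.integral_mono_on hxy (hw.const_mul _) hfw fun t ht => ?_
    exact mul_le_mul_of_nonneg_right (hf ⟨le_rfl, hxy⟩ ht ht.1) (hw0 t ht)
  · refine intervalIntegral.integral_mono_on hxy hfw (hw.const_mul _) fun t ht => ?_
    exact mul_le_mul_of_nonneg_right (hf ht ⟨hxy, le_rfl⟩ ht.2) (hw0 t ht)

theorem integral_mem_Icc_of_forall_mem_unitInterval (hxy : x ≤ y)
    (hg : IntervalIntegrable g volume x y) (hg01 : ∀ t ∈ Icc x y, g t ∈ Icc (0 : ℝ) 1) :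
    (∫ t in x..y, g t) ∈ Icc 0 (y - x) :=
  ⟨intervalIntegral.integral_nonneg hxy fun t ht => (hg01 t ht).1, by
    simpa using intervalIntegral.integral_mono_on hxy hg intervalIntegrable_const
      fun t ht => (hg01 t ht).2⟩

theorem integral_one_sub_eq_integral_of_eq_add_integral (hg : IntervalIntegrable g volume a b)
    (hg_ac : IntervalIntegrable g volume a c) (hc : c = a + ∫ t in a..b, g t) :
    ∫ t in a..c, (1 - g t) = ∫ t in c..b, g t := by
  rw [intervalIntegral.integral_sub intervalIntegrable_const hg_ac,
    ← intervalIntegral.integral_interval_sub_left hg hg_ac]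
  simp [hc]

theorem integral_sub_integral_mul_eq (hf : IntervalIntegrable f volume a c)
    (hfg_ac : IntervalIntegrable (fun t => f t * g t) volume a c)
    (hfg_cb : IntervalIntegrable (fun t => f t * g t) volume c b) :
    (∫ t in a..c, f t) - ∫ t in a..b, f t * g t
      = (∫ t in a..c, f t * (1 - g t)) - ∫ t in c..b, f t * g t := by
  simp only [mul_sub, mul_one]
  rw [← intervalIntegral.integral_add_adjacent_intervals hfg_ac hfg_cb,
    intervalIntegral.integral_sub hf hfg_ac]
  ring

theorem abs_integral_sub_integral_mul_le_of_balance (hac : a ≤ c) (hcb : c ≤ b)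
    (hf : MonotoneOn f (Icc a b)) (hg : IntervalIntegrable g volume a b)
    (hg01 : ∀ t ∈ Icc a b, g t ∈ Icc (0 : ℝ) 1)
    (hmass : ∫ t in a..c, (1 - g t) = ∫ t in c..b, g t) :
    |(∫ t in a..c, f t) - ∫ t in a..b, f t * g t|
      ≤ (f c - f a) * (c - a) + (f b - f c) * (b - c) := by
  have hc : c ∈ uIcc a b := by rw [uIcc_of_le (hac.trans hcb)]; exact ⟨hac, hcb⟩
  have hg_ac := hg.mono_set (uIcc_subset_uIcc_left hc)
  have hg_cb := hg.mono_set (uIcc_subset_uIcc_right hc)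
  have hg01_ac := fun t ht => hg01 t (Icc_subset_Icc_right hcb ht)
  have hg01_cb := fun t ht => hg01 t (Icc_subset_Icc_left hac ht)
  have hf_ac := hf.mono (Icc_subset_Icc_right hcb)
  have hf_cb := hf.mono (Icc_subset_Icc_left hac)
  have h1g_ac : IntervalIntegrable (fun t => 1 - g t) volume a c :=
    intervalIntegrable_const.sub hg_ac
  have h1g01_ac : ∀ t ∈ Icc a c, 1 - g t ∈ Icc (0 : ℝ) 1 := fun t ht =>
    ⟨sub_nonneg.2 (hg01_ac t ht).2, sub_le_self _ (hg01_ac t ht).1⟩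
  set m := ∫ t in c..b, g t
  obtain ⟨hA_lo, hA_hi⟩ :=
    hmass ▸ hf_ac.integral_mul_mem_Icc hac h1g_ac fun t ht => (h1g01_ac t ht).1
  obtain ⟨hB_lo, hB_hi⟩ := hf_cb.integral_mul_mem_Icc hcb hg_cb fun t ht => (hg01_cb t ht).1
  have hm_le_ca : m ≤ c - a :=
    hmass ▸ (integral_mem_Icc_of_forall_mem_unitInterval hac h1g_ac h1g01_ac).2
  have hm_le_bc : m ≤ b - c := (integral_mem_Icc_of_forall_mem_unitInterval hcb hg_cb hg01_cb).2
  have hfg_ac := (uIcc_of_le hac ▸ hf_ac).intervalIntegrable_mul hg_ac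
  have hfg_cb := (uIcc_of_le hcb ▸ hf_cb).intervalIntegrable_mul hg_cb
  rw [integral_sub_integral_mul_eq (uIcc_of_le hac ▸ hf_ac).intervalIntegrable hfg_ac hfg_cb,
    abs_sub_comm, abs_of_nonneg (by linarith)]
  have hfac := hf ⟨le_rfl, hac.trans hcb⟩ ⟨hac, hcb⟩ hac
  have hfcb := hf ⟨hac, hcb⟩ ⟨hac.trans hcb, le_rfl⟩ hcb
  calc (∫ t in c..b, f t * g t) - ∫ t in a..c, f t * (1 - g t)
      ≤ (f c - f a) * m + (f b - f c) * m := by linarith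
    _ ≤ (f c - f a) * (c - a) + (f b - f c) * (b - c) := by gcongr

end

theorem steffensen_monotone_one_general (a b : ℝ) (hab : a < b) (f g : ℝ → ℝ)
    (hg : IntervalIntegrable g volume a b)
    (hg01 : ∀ t ∈ Set.Icc a b, 0 ≤ g t ∧ g t ≤ 1)
    (hf_mono : MonotoneOn f (Set.Icc a b))
    (lam : ℝ) (hlam : lam = ∫ t in a..b, g t) :
    |(∫ t in a..(a + lam), f t) - ∫ t in a..b, f t * g t|
      ≤ lam * (f (a + lam) - f a) + (b - a - lam) * (f b - f (a + lam)) := by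
  obtain ⟨hlam0, hlam_le⟩ := hlam ▸ integral_mem_Icc_of_forall_mem_unitInterval hab.le hg hg01
  have hac : a ≤ a + lam := by linarith
  have hcb : a + lam ≤ b := by linarith
  have hc : a + lam ∈ uIcc a b := by rw [uIcc_of_le hab.le]; exact ⟨hac, hcb⟩
  have hmass := integral_one_sub_eq_integral_of_eq_add_integral hg
    (hg.mono_set (uIcc_subset_uIcc_left hc)) (congrArg (a + ·) hlam)
  calc _ ≤ _ := abs_integral_sub_integral_mul_le_of_balance hac hcb hf_mono hg hg01 hmass
    _ = _ := by ring

theorem steffensen_monotone_one (a b : ℝ) (hab : a < b) (f g : ℝ → ℝ)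
    (hg : IntervalIntegrable g volume a b)
    (hg01 : ∀ t ∈ Set.Icc a b, 0 ≤ g t ∧ g t ≤ 1)
    (hf_mono : MonotoneOn f (Set.Icc a b))
    (hfg : IntervalIntegrable (fun t => f t * g t) volume a b)
    (lam : ℝ) (hlam : lam = ∫ t in a..b, g t) :
    |(∫ t in a..(a + lam), f t) - ∫ t in a..b, f t * g t|
      ≤ lam * (f (a + lam) - f a) + (b - a - lam) * (f b - f (a + lam)) :=
  steffensen_monotone_one_general a b hab f g hg hg01 hf_mono lam hlam
end

section
/- Let g : [a,b] → ℝ be integrable with 0 ≤ g(t) ≤ 1 for all t ∈ [a,b], and let f : [a,b] → ℝ be absolutely continuous on [a,b] with derivative f' essentially bounded on [a,b]. Setting λ = ∫_a^b g(t) dt, one has |∫_a^{a+λ} f(t) dt − ∫_a^b f(t) g(t) dt| ≤ (1/2)[λ² + (b − a − λ)²] · ‖f'‖_{L^∞[a,b]}. -/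
/-!
Write `f(x) = f(a) + ∫_a^x f'` and move the derivative onto the weights by integration by parts
between absolutely continuous primitives. With `c = a + λ` the difference becomes
`∫_a^c f'(s) (∫_a^s g - (s - a)) ds - ∫_c^b f'(s) (∫_s^b g) ds`, and `0 ≤ g ≤ 1` bounds the two
kernels by `s - a` and `b - s`, whose integrals are `λ² / 2` and `(b - a - λ)² / 2`.
-/

open MeasureTheory Set intervalIntegral
open scoped Interval

theorem IntervalIntegrable.ae_deriv_integral_eq {χ : ℝ → ℝ} {a b : ℝ}
    (hχ : IntervalIntegrable χ volume a b) :
    ∀ᵐ x, x ∈ Ι a b → deriv (fun x => ∫ t in a..x, χ t) x = χ x := by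
  filter_upwards [hχ.ae_hasDerivAt_integral] with x hx hxI
  exact (hx (uIoc_subset_uIcc hxI) a left_mem_uIcc).deriv

theorem integral_primitive_mul_eq {φ ψ : ℝ → ℝ} {a b : ℝ}
    (hφ : IntervalIntegrable φ volume a b) (hψ : IntervalIntegrable ψ volume a b) :
    ∫ t in a..b, (∫ s in a..t, φ s) * ψ t = ∫ s in a..b, φ s * ∫ t in s..b, ψ t := by
  have hΦ := hφ.absolutelyContinuousOnInterval_intervalIntegral left_mem_uIcc
  have hΨ := hψ.absolutelyContinuousOnInterval_intervalIntegral left_mem_uIcc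
  have hφΨ : IntervalIntegrable (fun s => φ s * ∫ t in a..s, ψ t) volume a b :=
    hφ.mul_continuousOn (continuousOn_primitive_interval' hψ left_mem_uIcc)
  calc ∫ t in a..b, (∫ s in a..t, φ s) * ψ t
      = ∫ t in a..b, (∫ s in a..t, φ s) * deriv (fun x => ∫ s in a..x, ψ s) t :=
        intervalIntegral.integral_congr_ae <| by
          filter_upwards [hψ.ae_deriv_integral_eq] with t ht htI using by rw [ht htI]
    _ = (∫ s in a..b, φ s) * (∫ t in a..b, ψ t)
          - ∫ s in a..b, φ s * ∫ t in a..s, ψ t := by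
        rw [hΦ.integral_mul_deriv_eq_deriv_mul hΨ, integral_same, zero_mul, sub_zero]
        congr 1
        refine intervalIntegral.integral_congr_ae ?_
        filter_upwards [hφ.ae_deriv_integral_eq] with s hs hsI using by rw [hs hsI]
    _ = ∫ s in a..b, φ s * ((∫ t in a..b, ψ t) - ∫ t in a..s, ψ t) := by
        simp only [mul_sub]
        rw [integral_sub (hφ.mul_const _) hφΨ, intervalIntegral.integral_mul_const]
    _ = ∫ s in a..b, φ s * ∫ t in s..b, ψ t :=
        integral_congr fun s hs => by
          rw [integral_interval_sub_left hψ (hψ.mono_set (uIcc_subset_uIcc_left hs))]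

theorem integral_mul_eq_of_eq_add_primitive {f f' ψ : ℝ → ℝ} {a b : ℝ}
    (hf : ∀ x ∈ [[a, b]], f x = f a + ∫ t in a..x, f' t)
    (hf' : IntervalIntegrable f' volume a b) (hψ : IntervalIntegrable ψ volume a b) :
    ∫ t in a..b, f t * ψ t
      = f a * (∫ t in a..b, ψ t) + ∫ s in a..b, f' s * ∫ t in s..b, ψ t := by
  have hFψ : IntervalIntegrable (fun t => (∫ s in a..t, f' s) * ψ t) volume a b :=
    hψ.continuousOn_mul (continuousOn_primitive_interval' hf' left_mem_uIcc)
  calc ∫ t in a..b, f t * ψ t = ∫ t in a..b, (f a * ψ t + (∫ s in a..t, f' s) * ψ t) :=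
        integral_congr fun t ht => by rw [hf t ht, add_mul]
    _ = _ := by
        rw [integral_add (hψ.const_mul _) hFψ, intervalIntegral.integral_const_mul,
          integral_primitive_mul_eq hf' hψ]

theorem integral_mem_Icc_of_mem_Icc_zero_one {g : ℝ → ℝ} {x y : ℝ} (hxy : x ≤ y)
    (hg : IntervalIntegrable g volume x y) (h01 : ∀ t ∈ Icc x y, g t ∈ Icc 0 1) :
    ∫ t in x..y, g t ∈ Icc 0 (y - x) :=
  ⟨integral_nonneg hxy fun t ht => (h01 t ht).1, by
    simpa using integral_mono_on hxy hg intervalIntegrable_const fun t ht => (h01 t ht).2⟩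

theorem abs_integral_mul_le_mul_integral {h k w : ℝ → ℝ} {a b M : ℝ} (hab : a ≤ b)
    (hh : ∀ᵐ s, s ∈ Ioc a b → |h s| ≤ M) (hk : ∀ s ∈ Ioc a b, |k s| ≤ w s)
    (hw : IntervalIntegrable w volume a b) :
    |∫ s in a..b, h s * k s| ≤ M * ∫ s in a..b, w s := by
  rw [← intervalIntegral.integral_const_mul, ← Real.norm_eq_abs]
  refine norm_integral_le_of_norm_le hab ?_ (hw.const_mul M)
  filter_upwards [hh] with s hs hsI
  rw [Real.norm_eq_abs, abs_mul]
  exact mul_le_mul (hs hsI) (hk s hsI) (abs_nonneg _) ((abs_nonneg _).trans (hs hsI))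

theorem integral_sub_integral_mul_eq_s14 {f f' g : ℝ → ℝ} {a b c : ℝ} (hac : a ≤ c) (hcb : c ≤ b)
    (hAC : ∀ x ∈ Icc a b, f x = f a + ∫ t in a..x, f' t)
    (hf' : IntervalIntegrable f' volume a b) (hg : IntervalIntegrable g volume a b)
    (hc : c - a = ∫ t in a..b, g t) :
    (∫ t in a..c, f t) - ∫ t in a..b, f t * g t
      = (∫ s in a..c, f' s * ((∫ t in a..s, g t) - (s - a)))
        - ∫ s in c..b, f' s * ∫ t in s..b, g t := by
  have hab := hac.trans hcb
  have hac_sub : [[a, c]] ⊆ [[a, b]] := uIcc_subset_uIcc_left (uIcc_of_le hab ▸ ⟨hac, hcb⟩)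
  have hcb_sub : [[c, b]] ⊆ [[a, b]] := uIcc_subset_uIcc_right (uIcc_of_le hab ▸ ⟨hac, hcb⟩)
  have hf'G : IntervalIntegrable (fun s => f' s * ∫ t in s..b, g t) volume a b :=
    hf'.mul_continuousOn (continuousOn_primitive_interval_left ((intervalIntegrable_iff').1 hg))
  have hf'c : IntervalIntegrable (fun s => f' s * (c - s)) volume a c :=
    (hf'.mono_set hac_sub).mul_continuousOn (g := fun s => c - s) (by fun_prop)
  have hkernel : ∀ s ∈ [[a, c]], (∫ t in a..s, g t) - (s - a) = c - s - ∫ t in s..b, g t :=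
    fun s hs => by
      rw [← integral_interval_sub_left hg
        (hg.mono_set ((uIcc_subset_uIcc_left hs).trans hac_sub))]
      linarith
  have hfc := integral_mul_eq_of_eq_add_primitive (ψ := fun _ => (1 : ℝ))
    (fun x hx => hAC x (uIcc_of_le hab ▸ hac_sub hx)) (hf'.mono_set hac_sub)
    intervalIntegrable_const
  have hfg := integral_mul_eq_of_eq_add_primitive
    (fun x hx => hAC x (uIcc_of_le hab ▸ hx)) hf' hg
  simp only [mul_one, intervalIntegral.integral_const, smul_eq_mul] at hfc
  rw [hfc, hfg, ← hc, integral_congr fun s hs => congrArg (f' s * ·) (hkernel s hs),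
    ← integral_add_adjacent_intervals (hf'G.mono_set hac_sub) (hf'G.mono_set hcb_sub),
    integral_congr fun s _ => mul_sub (f' s) (c - s) _,
    integral_sub hf'c (hf'G.mono_set hac_sub)]
  ring

theorem steffensen_Linfty_one (a b : ℝ) (hab : a < b) (f f' g : ℝ → ℝ)
    (hg : IntervalIntegrable g volume a b)
    (hg01 : ∀ t ∈ Set.Icc a b, 0 ≤ g t ∧ g t ≤ 1)
    (hf' : IntervalIntegrable f' volume a b)
    (hAC : ∀ x ∈ Set.Icc a b, f x = f a + ∫ t in a..x, f' t)
    (hbdd : MemLp f' ⊤ (volume.restrict (Set.Icc a b)))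
    (lam : ℝ) (hlam : lam = ∫ t in a..b, g t) :
    |(∫ t in a..(a + lam), f t) - ∫ t in a..b, f t * g t|
      ≤ 1 / 2 * (lam ^ 2 + (b - a - lam) ^ 2)
          * (eLpNormEssSup f' (volume.restrict (Set.Icc a b))).toReal := by
  set M := (eLpNormEssSup f' (volume.restrict (Icc a b))).toReal
  have hM {x y : ℝ} (hax : a ≤ x) (hyb : y ≤ b) : ∀ᵐ s, s ∈ Ioc x y → |f' s| ≤ M := by
    have := ae_le_lpNorm_exponent_top hbdd
    rw [← toReal_eLpNorm hbdd.1, eLpNorm_exponent_top,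
      ae_restrict_iff' measurableSet_Icc] at this
    exact this.mono fun s hs hsI => hs ⟨hax.trans hsI.1.le, hsI.2.trans hyb⟩
  have hgI {x y : ℝ} (hax : a ≤ x) (hxy : x ≤ y) (hyb : y ≤ b) :
      ∫ t in x..y, g t ∈ Icc 0 (y - x) :=
    integral_mem_Icc_of_mem_Icc_zero_one hxy
      (hg.mono_set (uIcc_subset_uIcc (uIcc_of_le hab.le ▸ ⟨hax, hxy.trans hyb⟩)
        (uIcc_of_le hab.le ▸ ⟨hax.trans hxy, hyb⟩)))
      fun t ht => hg01 t ⟨hax.trans ht.1, ht.2.trans hyb⟩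
  obtain ⟨hlam0, hlamle⟩ := hlam ▸ hgI le_rfl hab.le le_rfl
  rw [integral_sub_integral_mul_eq_s14 (by linarith) (by linarith) hAC hf' hg
    (by rw [← hlam]; ring)]
  calc _ ≤ |∫ s in a..a + lam, f' s * ((∫ t in a..s, g t) - (s - a))|
        + |∫ s in a + lam..b, f' s * ∫ t in s..b, g t| := abs_sub _ _
    _ ≤ M * (∫ s in a..a + lam, (s - a)) + M * ∫ s in a + lam..b, (b - s) := by
        gcongr
        · refine abs_integral_mul_le_mul_integral (by linarith) (hM le_rfl (by linarith))
            (fun s hs => abs_sub_le_iff.2 ?_) (Continuous.intervalIntegrable (by fun_prop) _ _)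
          obtain ⟨h0, h1⟩ := hgI le_rfl hs.1.le (by linarith [hs.2])
          constructor <;> linarith
        · refine abs_integral_mul_le_mul_integral (by linarith) (hM (by linarith) le_rfl)
            (fun s hs => ?_) (Continuous.intervalIntegrable (by fun_prop) _ _)
          obtain ⟨h0, h1⟩ := hgI (by linarith [hs.1]) hs.2 le_rfl
          rwa [abs_of_nonneg h0]
    _ = _ := by
        simp only [integral_comp_sub_right (fun x => x), integral_comp_sub_left (fun x => x),
          integral_id]
        ring
end
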